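/- Let n be a nonempty finite type, 0 < α < 1, A an n×n real matrix, and x₀ ∈ ℝ^n. Then the function x(t) = E_α(t^α • A) · x₀ satisfies the Volterra integral equation of the fractional initial value problem: for every t ≥ 0, E_α(t^α • A) · x₀ = x₀ + (Γ(α))⁻¹ • ∫_0^t (t−s)^{α−1} • (A · (E_α(s^α • A) · x₀)) ds. -/

import Mathlib

/-- The Mittag-Leffler matrix function `E_α(A) = ∑ A^k / Γ(αk+1)` of a real matrix. -/
noncomputable def mlMatR (α : ℝ) {n : Type*} [Fintype n] [DecidableEq n]
    (A : Matrix n n ℝ) : Matrix n n ℝ :=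
  ∑' k : ℕ, (Real.Gamma (α * k + 1))⁻¹ • A ^ k

/-!
Write `E_α(a) = ∑ₖ aᵏ / Γ(αk + 1)`. The Beta integral
`∫₀ᵗ (t - s)^(α-1) s^(αk) ds = Γ(α) Γ(αk + 1) / Γ(α(k+1) + 1) · t^(α(k+1))`
shows that the fractional integral `f ↦ Γ(α)⁻¹ ∫₀ᵗ (t - s)^(α-1) f(s) ds` maps the `k`-th term of
`a E_α(s^α a)` to the `(k+1)`-st term of `E_α(t^α a)`, so it sends `a E_α(s^α a)` to
`E_α(t^α a) - 1`. Integrating term by term is legitimate because `Γ(x + 1) ≥ ρ^x e^(-ρ)` (cut the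
Euler integral at `ρ`) makes `∑ₖ rᵏ / Γ(αk + 1)` converge for every `r`. Matrices form a Banach
algebra under the ℓ∞ operator norm, and `M ↦ M x₀` carries the identity to the vector equation.
-/

open MeasureTheory Real Set

theorem rpow_mul_exp_neg_le_Gamma_add_one {x ρ : ℝ} (hx : 0 ≤ x) (hρ : 0 ≤ ρ) :
    ρ ^ x * exp (-ρ) ≤ Gamma (x + 1) := by
  have hint : IntegrableOn (fun t : ℝ => exp (-t) * t ^ x) (Ioi 0) := by
    simpa using GammaIntegral_convergent (s := x + 1) (by linarith)
  calc ρ ^ x * exp (-ρ) = ∫ t in Ioi ρ, ρ ^ x * exp (-t) := by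
        rw [integral_const_mul, integral_exp_neg_Ioi]
    _ ≤ ∫ t in Ioi ρ, exp (-t) * t ^ x := by
        refine setIntegral_mono_on ((integrableOn_exp_neg_Ioi ρ).const_mul _)
          (hint.mono_set (Ioi_subset_Ioi hρ)) measurableSet_Ioi fun t ht => ?_
        rw [mul_comm]
        exact mul_le_mul_of_nonneg_left (rpow_le_rpow hρ (le_of_lt ht) hx) (exp_pos _).le
    _ ≤ ∫ t in Ioi 0, exp (-t) * t ^ x :=
        setIntegral_mono_set hint
          ((ae_restrict_iff' measurableSet_Ioi).2 (.of_forall fun t ht =>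
            mul_nonneg (exp_pos _).le (rpow_nonneg (le_of_lt ht) _)))
          (Ioi_subset_Ioi hρ).eventuallyLE
    _ = Gamma (x + 1) := by rw [Gamma_eq_integral (by linarith), add_sub_cancel_right]

theorem summable_inv_Gamma_mul_pow {α r : ℝ} (hα : 0 < α) (hr : 0 ≤ r) :
    Summable fun k : ℕ => (Gamma (α * k + 1))⁻¹ * r ^ k := by
  set ρ := (2 * r) ^ α⁻¹
  have hρ : ∀ k : ℕ, ρ ^ (α * k) = (2 * r) ^ k := fun k => by
    rw [← rpow_mul (by positivity), inv_mul_cancel_left₀ hα.ne', rpow_natCast]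
  refine (summable_geometric_two.mul_right (exp ρ)).of_nonneg_of_le
    (fun k => mul_nonneg (inv_nonneg.2 (Gamma_pos_of_pos (by positivity)).le) (pow_nonneg hr k))
    fun k => ?_
  have hΓ := Gamma_pos_of_pos (show 0 < α * k + 1 by positivity)
  have key := mul_le_mul_of_nonneg_left
    (rpow_mul_exp_neg_le_Gamma_add_one (by positivity : 0 ≤ α * k) (by positivity : 0 ≤ ρ))
    (exp_pos ρ).le
  rw [mul_left_comm, ← exp_add, add_neg_cancel, exp_zero, mul_one] at key
  calc (Gamma (α * k + 1))⁻¹ * r ^ k = (1 / 2) ^ k * (ρ ^ (α * k) / Gamma (α * k + 1)) := by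
        rw [hρ, ← mul_div_assoc, ← mul_pow, one_div, inv_mul_cancel_left₀ two_ne_zero,
          div_eq_inv_mul]
    _ ≤ (1 / 2) ^ k * exp ρ := by
        gcongr
        rwa [div_le_iff₀ hΓ]

theorem integral_sub_rpow_mul_rpow {α β t : ℝ} (hα : 0 < α) (hβ : -1 < β) (ht : 0 < t) :
    ∫ s in (0 : ℝ)..t, (t - s) ^ (α - 1) * s ^ β =
      Gamma α * Gamma (β + 1) / Gamma (α + β + 1) * t ^ (α + β) := by
  have hB := Complex.betaIntegral_scaled (β + 1 : ℝ) α ht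
  rw [Complex.betaIntegral_eq_Gamma_mul_div _ _ (by simp; linarith) (by simpa)] at hB
  apply Complex.ofReal_injective
  rw [← intervalIntegral.integral_ofReal]
  calc ∫ s in (0 : ℝ)..t, (((t - s) ^ (α - 1) * s ^ β : ℝ) : ℂ)
      = ∫ s in (0 : ℝ)..t, (s : ℂ) ^ (((β + 1 : ℝ) : ℂ) - 1) * ((t : ℂ) - s) ^ ((α : ℂ) - 1) := by
        refine intervalIntegral.integral_congr fun s hs => ?_
        rw [uIcc_of_le ht.le] at hs
        rw [Complex.ofReal_mul, Complex.ofReal_cpow (sub_nonneg.2 hs.2),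
          Complex.ofReal_cpow hs.1, mul_comm]
        push_cast
        ring_nf
    _ = _ := by
        have e1 : ((β + 1 : ℝ) : ℂ) + α - 1 = ((α + β : ℝ) : ℂ) := by push_cast; ring
        have e2 : ((β + 1 : ℝ) : ℂ) + α = ((α + β + 1 : ℝ) : ℂ) := by push_cast; ring
        rw [hB, e1, e2, ← Complex.ofReal_cpow ht.le, Complex.Gamma_ofReal, Complex.Gamma_ofReal,
          Complex.Gamma_ofReal]
        push_cast
        ring

theorem integral_sub_rpow_smul_tsum {E : Type*} [NormedAddCommGroup E] [NormedSpace ℝ E]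
    [CompleteSpace E] {α t : ℝ} (hα : 0 < α) (ht : 0 ≤ t) (v : ℕ → E)
    (hv : Summable fun k : ℕ => (Gamma (α * (k + 1) + 1))⁻¹ * t ^ (α * (k + 1)) * ‖v k‖) :
    (Gamma α)⁻¹ • ∫ s in (0 : ℝ)..t,
        (t - s) ^ (α - 1) • ∑' k : ℕ, ((Gamma (α * k + 1))⁻¹ * s ^ (α * k)) • v k =
      ∑' k : ℕ, ((Gamma (α * (k + 1) + 1))⁻¹ * t ^ (α * (k + 1))) • v k := by
  rcases ht.eq_or_lt with rfl | ht
  · simp [zero_rpow, hα.ne', Nat.cast_add_one_ne_zero]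
  set F : ℕ → ℝ → E := fun k s =>
    ((Gamma (α * k + 1))⁻¹ * ((t - s) ^ (α - 1) * s ^ (α * k))) • v k
  have hbeta (k : ℕ) : ∫ s in (0 : ℝ)..t, (t - s) ^ (α - 1) * s ^ (α * k) =
      Gamma α * Gamma (α * k + 1) / Gamma (α * (k + 1) + 1) * t ^ (α * (k + 1)) := by
    rw [integral_sub_rpow_mul_rpow hα (by linarith [mul_nonneg hα.le k.cast_nonneg]) ht]
    ring_nf
  have hint (k : ℕ) : IntegrableOn (fun s => (t - s) ^ (α - 1) * s ^ (α * k)) (Ioc 0 t) := by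
    refine (intervalIntegrable_iff_integrableOn_Ioc_of_le ht.le).1
      (intervalIntegral.intervalIntegrable_of_integral_ne_zero ?_)
    rw [hbeta]
    exact (by positivity : (0:ℝ) < _).ne'
  have hF_int (k : ℕ) : IntegrableOn (F k) (Ioc 0 t) := ((hint k).const_mul _).smul_const _
  have hF_norm (k : ℕ) : ∫ s in Ioc 0 t, ‖F k s‖ =
      Gamma α * ((Gamma (α * (k + 1) + 1))⁻¹ * t ^ (α * (k + 1)) * ‖v k‖) := by
    have hpos : ∀ s ∈ Ioc 0 t, ‖F k s‖ =
        (Gamma (α * k + 1))⁻¹ * ((t - s) ^ (α - 1) * s ^ (α * k)) * ‖v k‖ := fun s hs => by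
      rw [norm_smul, Real.norm_of_nonneg (by
        have := hs.1.le; have := sub_nonneg.2 hs.2; positivity)]
    rw [setIntegral_congr_fun measurableSet_Ioc hpos, integral_mul_const, integral_const_mul,
      ← intervalIntegral.integral_of_le ht.le, hbeta]
    field_simp
  have hF (k : ℕ) : ∫ s in (0 : ℝ)..t, F k s =
      (Gamma α * ((Gamma (α * (k + 1) + 1))⁻¹ * t ^ (α * (k + 1)))) • v k := by
    rw [intervalIntegral.integral_smul_const, intervalIntegral.integral_const_mul, hbeta]
    field_simp
  have hswap : ∫ s in (0 : ℝ)..t,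
      (t - s) ^ (α - 1) • ∑' k : ℕ, ((Gamma (α * k + 1))⁻¹ * s ^ (α * k)) • v k =
        ∑' k : ℕ, ∫ s in (0 : ℝ)..t, F k s := by
    simp only [intervalIntegral.integral_of_le ht.le]
    rw [integral_tsum_of_summable_integral_norm hF_int
      (by simpa only [hF_norm] using hv.mul_left _)]
    congr 1 with s
    rw [← tsum_const_smul'']
    congr 1 with k
    rw [smul_smul, mul_left_comm]
  rw [hswap, ← tsum_const_smul'']
  simp only [hF, smul_smul, inv_mul_cancel_left₀ (Gamma_pos_of_pos hα).ne']

section BanachAlgebra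

variable {𝔸 : Type*} [NormedRing 𝔸] [NormedAlgebra ℝ 𝔸] [CompleteSpace 𝔸]

noncomputable def mittagLeffler (α : ℝ) (a : 𝔸) : 𝔸 :=
  ∑' k : ℕ, (Gamma (α * k + 1))⁻¹ • a ^ k

variable {α : ℝ}

theorem summable_inv_Gamma_smul_pow (hα : 0 < α) (a : 𝔸) :
    Summable fun k : ℕ => (Gamma (α * k + 1))⁻¹ • a ^ k := by
  refine (summable_inv_Gamma_mul_pow hα (norm_nonneg a)).of_norm_bounded_eventually_nat
    (Filter.eventually_atTop.2 ⟨1, fun k hk => ?_⟩)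
  rw [norm_smul, norm_inv, Real.norm_of_nonneg (Gamma_pos_of_pos (by positivity)).le]
  gcongr
  exact norm_pow_le' a hk

theorem hasSum_map_mittagLeffler_rpow_smul {E : Type*} [AddCommGroup E] [Module ℝ E]
    [TopologicalSpace E] (hα : 0 < α) (φ : 𝔸 →L[ℝ] E) (a : 𝔸) {s : ℝ} (hs : 0 ≤ s) :
    HasSum (fun k : ℕ => ((Gamma (α * k + 1))⁻¹ * s ^ (α * k)) • φ (a ^ k))
      (φ (mittagLeffler α (s ^ α • a))) := by
  simpa only [mittagLeffler, smul_pow, ← rpow_mul_natCast hs, smul_smul, map_smul] using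
    (summable_inv_Gamma_smul_pow hα (s ^ α • a)).hasSum.mapL φ

theorem map_mittagLeffler_rpow_smul_eq_add_integral {E : Type*} [NormedAddCommGroup E]
    [NormedSpace ℝ E] [CompleteSpace E] (hα : 0 < α) {t : ℝ} (ht : 0 ≤ t) (φ : 𝔸 →L[ℝ] E) (a : 𝔸) :
    φ (mittagLeffler α (t ^ α • a)) =
      φ 1 + (Gamma α)⁻¹ •
        ∫ s in (0 : ℝ)..t, (t - s) ^ (α - 1) • φ (a * mittagLeffler α (s ^ α • a)) := by
  have hmul (s : ℝ) (hs : 0 ≤ s) : φ (a * mittagLeffler α (s ^ α • a)) =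
      ∑' k : ℕ, ((Gamma (α * k + 1))⁻¹ * s ^ (α * k)) • φ (a ^ (k + 1)) := by
    simpa only [ContinuousLinearMap.comp_apply, ContinuousLinearMap.mul_apply', pow_succ'] using
      (hasSum_map_mittagLeffler_rpow_smul hα
        (φ.comp (ContinuousLinearMap.mul ℝ 𝔸 a)) a hs).tsum_eq.symm
  have hv : Summable fun k : ℕ =>
      (Gamma (α * (k + 1) + 1))⁻¹ * t ^ (α * (k + 1)) * ‖φ (a ^ (k + 1))‖ := by
    refine (((summable_nat_add_iff 1).2 (summable_inv_Gamma_mul_pow hα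
      (by positivity : 0 ≤ t ^ α * ‖a‖))).mul_left ‖φ‖).of_nonneg_of_le (fun k => by positivity)
      fun k => ?_
    rw [mul_pow, ← rpow_mul_natCast ht]
    push_cast
    calc _ ≤ (Gamma (α * (k + 1) + 1))⁻¹ * t ^ (α * (k + 1)) * (‖φ‖ * ‖a‖ ^ (k + 1)) := by
          gcongr
          exact φ.le_opNorm_of_le (norm_pow_le' a k.succ_pos)
      _ = _ := by ring
  have hseries := hasSum_map_mittagLeffler_rpow_smul hα φ a ht
  rw [← hseries.tsum_eq, hseries.summable.tsum_eq_zero_add,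
    intervalIntegral.integral_congr (g := fun s => (t - s) ^ (α - 1) •
      ∑' k : ℕ, ((Gamma (α * k + 1))⁻¹ * s ^ (α * k)) • φ (a ^ (k + 1))) fun s hs => ?_,
    integral_sub_rpow_smul_tsum hα ht _ hv]
  · simp
  · rw [uIcc_of_le ht] at hs
    simp only [hmul s hs.1]

end BanachAlgebra

theorem mittagLeffler_solves_volterra_general {n : Type*} [Fintype n] [DecidableEq n]
    (α : ℝ) (hα0 : 0 < α) (A : Matrix n n ℝ) (x₀ : n → ℝ) :
    ∀ t : ℝ, 0 ≤ t →
      (mlMatR α ((t ^ α) • A)).mulVec x₀ =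
        x₀ + (Real.Gamma α)⁻¹ •
          ∫ s in (0:ℝ)..t,
            ((t - s) ^ (α - 1)) • (A.mulVec ((mlMatR α ((s ^ α) • A)).mulVec x₀)) := by
  intro t ht
  let _ := Matrix.linftyOpNormedRing (n := n) (α := ℝ)
  let _ := Matrix.linftyOpNormedAlgebra (R := ℝ) (n := n) (α := ℝ)
  have h := map_mittagLeffler_rpow_smul_eq_add_integral hα0 ht
    (LinearMap.toContinuousLinearMap ((Matrix.mulVecBilin ℝ ℝ).flip x₀)) A
  simp only [LinearMap.coe_toContinuousLinearMap', LinearMap.flip_apply,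
    Matrix.mulVecBilin_apply, Matrix.one_mulVec] at h
  simp only [Matrix.mulVec_mulVec]
  exact h

theorem mittagLeffler_solves_volterra {n : Type*} [Fintype n] [DecidableEq n] [Nonempty n]
    (α : ℝ) (hα0 : 0 < α) (hα1 : α < 1) (A : Matrix n n ℝ) (x₀ : n → ℝ) :
    ∀ t : ℝ, 0 ≤ t →
      (mlMatR α ((t ^ α) • A)).mulVec x₀ =
        x₀ + (Real.Gamma α)⁻¹ •
          ∫ s in (0:ℝ)..t,
            ((t - s) ^ (α - 1)) • (A.mulVec ((mlMatR α ((s ^ α) • A)).mulVec x₀)) :=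
  mittagLeffler_solves_volterra_general α hα0 A x₀
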